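/- Let (X, c) be a finite metric space and let Q ⊆ R be nonempty subsets of X. Then ∑_{r ∈ R \ Q} [cost(R \ {r}) − cost(R)] ≤ cost(Q) − cost(R). (Super-modularity of the cost function; note that for r ∈ R \ Q the set R \ {r} contains Q and hence is nonempty.) -/
import Mathlib


/-- `kmDist x F` is the distance from a point `x` to a nonempty finite set `F`,
i.e. `min_{f ∈ F} dist x f` (junk value `0` if `F = ∅`). -/
noncomputable def kmDist {X : Type*} [MetricSpace X] (x : X) (F : Finset X) : ℝ :=
  if h : F.Nonempty then F.inf' h (fun f => dist x f) else 0

/-- `kmCost F = ∑_{x ∈ X} c(x, F)`, the total service cost of the facility set `F`. -/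
noncomputable def kmCost {X : Type*} [MetricSpace X] [Fintype X] (F : Finset X) : ℝ :=
  ∑ x : X, kmDist x F

lemma kmDist_anti {X : Type*} [MetricSpace X] (x : X) {F G : Finset X}
    (hF : F.Nonempty) (hFG : F ⊆ G) : kmDist x G ≤ kmDist x F := by
  rw [kmDist, kmDist, dif_pos hF, dif_pos (hF.mono hFG)]
  exact Finset.inf'_mono _ hFG hF

lemma kmDist_le {X : Type*} [MetricSpace X] (x : X) {F : Finset X} {f : X}
    (hf : f ∈ F) : kmDist x F ≤ dist x f := by
  rw [kmDist, dif_pos ⟨f, hf⟩]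
  exact Finset.inf'_le _ hf

lemma kmDist_pointwise {X : Type*} [MetricSpace X] [DecidableEq X] (x : X)
    (Q R : Finset X) (hQ : Q.Nonempty) (hQR : Q ⊆ R) :
    ∑ r ∈ R \ Q, (kmDist x (R.erase r) - kmDist x R) ≤ kmDist x Q - kmDist x R := by
  have hR : R.Nonempty := hQ.mono hQR
  obtain ⟨f, hfR, hfe⟩ := Finset.exists_mem_eq_inf' hR (fun f => dist x f)
  have hdR : kmDist x R = dist x f := by rw [kmDist, dif_pos hR]; exact hfe
  have hQR' : kmDist x R ≤ kmDist x Q := kmDist_anti x hQ hQR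
  calc ∑ r ∈ R \ Q, (kmDist x (R.erase r) - kmDist x R)
      ≤ ∑ r ∈ R \ Q, (if r = f then kmDist x Q - kmDist x R else 0) := by
        apply Finset.sum_le_sum
        intro r hr
        obtain ⟨hrR, hrQ⟩ := Finset.mem_sdiff.mp hr
        by_cases h : r = f
        · rw [if_pos h]
          have hsub : Q ⊆ R.erase r := fun q hq =>
            Finset.mem_erase.mpr ⟨fun e => hrQ (e ▸ hq), hQR hq⟩
          have := kmDist_anti x hQ hsub
          linarith
        · rw [if_neg h]
          have hfe' : f ∈ R.erase r := Finset.mem_erase.mpr ⟨fun e => h e.symm, hfR⟩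
          have := kmDist_le x hfe'
          linarith [hdR]
    _ ≤ kmDist x Q - kmDist x R := by
        rw [Finset.sum_ite_eq' (R \ Q) f (fun _ => kmDist x Q - kmDist x R)]
        split_ifs with h
        · exact le_refl _
        · linarith

/-- Super-modularity of the cost function: for nonempty `Q ⊆ R`,
`∑_{r ∈ R \ Q} [cost(R \ {r}) − cost(R)] ≤ cost(Q) − cost(R)`. -/
theorem rgreedy_supermodularity {X : Type*} [MetricSpace X] [Fintype X] [DecidableEq X]
    (Q R : Finset X) (hQ : Q.Nonempty) (hQR : Q ⊆ R) :
    ∑ r ∈ R \ Q, (kmCost (R.erase r) - kmCost R) ≤ kmCost Q - kmCost R := by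
  simp only [kmCost, ← Finset.sum_sub_distrib]
  rw [Finset.sum_comm]
  exact Finset.sum_le_sum fun x _ => kmDist_pointwise x Q R hQ hQR
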